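/- arXiv:1605.01221 — 3 statements merged into one kernel-verified Lean document; each statement's English description precedes it below -/
import Mathlib

section
/- Let M be a nonzero divisible right R-module over a right Ore domain R, and suppose M_tor ≠ 0. Then M_tor is infinite. -/
/-- If `M` is a nonzero divisible right module over a right Ore domain and
`M_tor ≠ 0`, then `M_tor` is infinite. -/
theorem torsion_of_nonzero_divisible_infinite
    {S : Type*} [Ring S] [IsDomain S]
    (hOre : ∀ a b : S, a ≠ 0 → b ≠ 0 → ∃ c d : S, a * c = b * d ∧ a * c ≠ 0)
    {M : Type*} [AddCommGroup M] [Module Sᵐᵒᵖ M]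
    (hM : ∃ x : M, x ≠ 0)
    (hdiv : ∀ s : S, s ≠ 0 → ∀ x : M, ∃ y : M, MulOpposite.op s • y = x)
    (htor : ∃ x : M, x ≠ 0 ∧ ∃ s : S, s ≠ 0 ∧ MulOpposite.op s • x = 0) :
    {x : M | ∃ s : S, s ≠ 0 ∧ MulOpposite.op s • x = 0}.Infinite := by
  set T := {x : M | ∃ s : S, s ≠ 0 ∧ MulOpposite.op s • x = 0} with hT
  intro hfin
  -- common annihilator for any finite set of torsion elements
  classical
  have key : ∀ (F : Finset M), (∀ t ∈ F, t ∈ T) →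
      ∃ r : S, r ≠ 0 ∧ ∀ t ∈ F, MulOpposite.op r • t = 0 := by
    intro F
    induction F using Finset.induction_on with
    | empty => intro _; exact ⟨1, one_ne_zero, fun t ht => absurd ht (Finset.notMem_empty t)⟩
    | @insert a F' ha ih =>
      intro hmem
      obtain ⟨r, hr, hrann⟩ := ih (fun t ht => hmem t (Finset.mem_insert_of_mem ht))
      obtain ⟨s, hs, hsa⟩ := hmem a (Finset.mem_insert_self a F')
      obtain ⟨c, d, hcd, hne⟩ := hOre s r hs hr
      refine ⟨s * c, hne, fun t ht => ?_⟩
      rcases Finset.mem_insert.mp ht with rfl | ht'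
      · have : MulOpposite.op (s * c) = MulOpposite.op c * MulOpposite.op s := rfl
        rw [this, mul_smul, hsa, smul_zero]
      · have : MulOpposite.op (s * c) = MulOpposite.op d * MulOpposite.op r := by
          rw [hcd]; rfl
        rw [this, mul_smul, hrann t ht', smul_zero]
  obtain ⟨r, hr, hrann⟩ := key hfin.toFinset (fun t ht => hfin.mem_toFinset.mp ht)
  obtain ⟨x, hx, s, hs, hsx⟩ := htor
  obtain ⟨y, hy⟩ := hdiv r hr x
  have hytor : y ∈ T := by
    refine ⟨r * s, mul_ne_zero hr hs, ?_⟩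
    have : MulOpposite.op (r * s) = MulOpposite.op s * MulOpposite.op r := rfl
    rw [this, mul_smul, hy, hsx]
  have := hrann y (hfin.mem_toFinset.mpr hytor)
  rw [hy] at this
  exact hx this
end

section
/- A field L of characteristic p > 0 is p-closed (every polynomial X^{pⁿ} + a_{n-1}X^{p^{n-1}} + ⋯ + a₁X^p + a₀X + b over L has a root in L) if and only if L has no finite field extension of degree divisible by p. -/
/-!
If no finite extension of `L` has degree divisible by `p`, then `L` is perfect (otherwise
`X ^ p - u` is irreducible of degree `p`), so a root `ξ` of `x ^ p ^ n + ∑ aᵢ x ^ p ^ i + b`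
generates a finite separable extension `E`. The trace commutes with Frobenius and is `L`-linear,
so `Tr ξ / [E : L]` is a root in `L`.

Conversely, let `L` be `p`-closed. On any finite extension `F` the Artin–Schreier map
`y ↦ y ^ p - y` is onto: for `c ∈ F` the powers `c ^ p ^ j` satisfy an `L`-linear relation, and
solving `y ^ p - y = c` inside their span reduces to a single additive equation over `L`. If some
finite extension had degree divisible by `p`, its Galois closure would have an automorphism `σ` of
order `p`. Additive Hilbert 90 gives `α` with `σ α = α + 1`; with `y ^ p - y = α ^ p - α` for
some `y` fixed by `σ`, the element `α - y` lies in `𝔽_p` and is still moved by `σ`, which is absurd.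
-/

open Polynomial Finset IntermediateField

universe u

def IsPClosed (p : ℕ) (L : Type*) [Field L] : Prop :=
  ∀ (n : ℕ) (a : Fin n → L) (b : L),
    ∃ x : L, x ^ p ^ n + (∑ i : Fin n, a i * x ^ p ^ (i : ℕ)) + b = 0

theorem exists_eq_sum_range_smul_of_isNoetherian {R M : Type*} [Semiring R] [AddCommMonoid M]
    [Module R M] [IsNoetherian R M] (v : ℕ → M) :
    ∃ (m : ℕ) (β : ℕ → R), v (m + 1) = ∑ j ∈ range (m + 1), β j • v j := by
  let W : ℕ →o Submodule R M :=
    ⟨fun k => Submodule.span R (v '' ↑(range k)), fun k l hkl =>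
      Submodule.span_mono (Set.image_mono (by simpa using hkl))⟩
  obtain ⟨m, hm⟩ := monotone_stabilizes_iff_noetherian.mpr ‹_› W
  have hv : v (m + 1) ∈ W (m + 1) := by
    rw [← hm (m + 1) m.le_succ, hm (m + 2) (by omega)]
    exact Submodule.subset_span ⟨m + 1, by simp, rfl⟩
  obtain ⟨β, hβ, hsum⟩ := (Finsupp.mem_span_image_iff_linearCombination R).mp hv
  exact ⟨m, β, by rw [← hsum, Finsupp.linearCombination_apply_of_mem_supported R hβ]⟩

section ArtinSchreier

variable {A : Type*} [CommRing A] {p : ℕ} [ExpChar A p]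

theorem sum_range_pow_pow_sub_one_succ (β : ℕ → A) (u : A) (j : ℕ) :
    ∑ i ∈ range (j + 2), (β (j + 1 - i) * u) ^ p ^ i - 1 =
      (∑ i ∈ range (j + 1), (β (j - i) * u) ^ p ^ i - 1) ^ p + β (j + 1) * u := by
  rw [sum_range_succ', sub_pow_expChar, one_pow, sum_pow_char]
  simp only [Nat.add_sub_add_right, ← pow_mul, ← pow_succ, Nat.sub_zero, pow_zero, pow_one]
  ring

theorem sum_range_mul_pow_pow_pow_sub_self (c u : A) (β Y : ℕ → A) (m : ℕ)
    (hc : c ^ p ^ (m + 1) = ∑ j ∈ range (m + 1), β j * c ^ p ^ j)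
    (hY0 : β 0 * u - Y 0 = 1) (hY : ∀ j, Y (j + 1) = Y j ^ p + β (j + 1) * u)
    (hYm : Y m ^ p = u) :
    (∑ j ∈ range (m + 1), Y j * c ^ p ^ j) ^ p - ∑ j ∈ range (m + 1), Y j * c ^ p ^ j = c := by
  rw [sum_pow_char]
  simp only [mul_pow, ← pow_mul, ← pow_succ]
  rw [sum_range_succ (fun j => Y j ^ p * c ^ p ^ (j + 1)), hYm, hc, mul_sum,
    sum_range_succ' (fun j => Y j * c ^ p ^ j), sum_range_succ' (fun j => u * (β j * c ^ p ^ j))]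
  have hcomm : ∀ j, u * (β j * c ^ p ^ j) = β j * u * c ^ p ^ j := fun j => by ring
  simp only [hcomm, hY, add_mul, sum_add_distrib, pow_zero, pow_one]
  linear_combination c * hY0

theorem exists_pow_sub_eq_of_pow_pow_eq_sum (c u : A) (β : ℕ → A) (m : ℕ)
    (hc : c ^ p ^ (m + 1) = ∑ j ∈ range (m + 1), β j * c ^ p ^ j)
    (hu : ∑ i ∈ range (m + 1), (β (m - i) * u) ^ p ^ (i + 1) = u + 1) :
    ∃ y : A, y ^ p - y = c := by
  -- Take `y = ∑ Yⱼ c ^ p ^ j`; after substituting `hc`, comparing coefficients of `c ^ p ^ j` asks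
  -- for `Y₀ = β₀ u - 1`, `Yⱼ₊₁ = Yⱼ ^ p + βⱼ₊₁ u` with `u = Yₘ ^ p`, and `Y` solves this recursion.
  let Y j := ∑ i ∈ range (j + 1), (β (j - i) * u) ^ p ^ i - 1
  refine ⟨_, sum_range_mul_pow_pow_pow_sub_self c u β Y m hc (by simp [Y]) (fun j => ?_) ?_⟩
  · exact sum_range_pow_pow_sub_one_succ β u j
  · simp only [Y, sub_pow_expChar, one_pow, sum_pow_char, ← pow_mul, ← pow_succ, hu]
    ring

end ArtinSchreier

namespace IsPClosed

variable {p : ℕ} {L : Type*} [Field L]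

theorem exists_pow_eq (h : IsPClosed p L) (b : L) : ∃ x : L, x ^ p = b := by
  obtain ⟨x, hx⟩ := h 1 (fun _ => 0) (-b)
  exact ⟨x, by simpa [add_neg_eq_zero] using hx⟩

theorem exists_pow_pow_eq (h : IsPClosed p L) (m : ℕ) (b : L) : ∃ x : L, x ^ p ^ m = b := by
  induction m generalizing b with
  | zero => exact ⟨b, by simp⟩
  | succ m ih =>
    obtain ⟨y, rfl⟩ := h.exists_pow_eq b
    obtain ⟨x, rfl⟩ := ih y
    exact ⟨x, by rw [pow_succ, pow_mul]⟩

theorem exists_sum_range_add_eq_zero_of_ne_zero (h : IsPClosed p L) {n : ℕ} {a : ℕ → L}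
    (ha : a n ≠ 0) (b : L) : ∃ z : L, ∑ i ∈ range (n + 1), a i * z ^ p ^ i + b = 0 := by
  obtain ⟨c, hc⟩ := h.exists_pow_pow_eq n (a n)⁻¹
  obtain ⟨x, hx⟩ := h n (fun i => a i * c ^ p ^ (i : ℕ)) b
  refine ⟨c * x, ?_⟩
  rw [← hx, sum_range_succ, mul_pow, hc, mul_inv_cancel_left₀ ha, ← Fin.sum_univ_eq_sum_range]
  simp only [mul_pow, mul_assoc]
  ring

theorem exists_sum_range_add_eq_zero (h : IsPClosed p L) {n : ℕ} {a : ℕ → L}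
    (ha : ∃ i ≤ n, a i ≠ 0) (b : L) : ∃ z : L, ∑ i ∈ range (n + 1), a i * z ^ p ^ i + b = 0 := by
  induction n with
  | zero =>
    obtain ⟨i, hi, hai⟩ := ha
    exact h.exists_sum_range_add_eq_zero_of_ne_zero (Nat.le_zero.mp hi ▸ hai) b
  | succ n ih =>
    by_cases han : a (n + 1) = 0
    · obtain ⟨i, hi, hai⟩ := ha
      have hin : i ≤ n := Nat.le_of_lt_succ (hi.lt_of_ne (by rintro rfl; exact hai han))
      obtain ⟨z, hz⟩ := ih ⟨i, hin, hai⟩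
      exact ⟨z, by rwa [sum_range_succ _ (n + 1), han, zero_mul, add_zero]⟩
    · exact h.exists_sum_range_add_eq_zero_of_ne_zero han b

theorem perfectRing [ExpChar L p] (h : IsPClosed p L) : PerfectRing L p :=
  .ofSurjective L p h.exists_pow_eq

theorem exists_pow_sub_eq {A : Type*} [CommRing A] [ExpChar A p]
    [Algebra L A] [Module.Finite L A] (h : IsPClosed p L) (c : A) : ∃ y : A, y ^ p - y = c := by
  obtain ⟨m, β, hc⟩ := exists_eq_sum_range_smul_of_isNoetherian (R := L) fun j => c ^ p ^ j
  -- the coefficient `-1` of `u` keeps this additive equation nonzero whatever `β` is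
  let a : ℕ → L := fun | 0 => -1 | i + 1 => β (m - i) ^ p ^ (i + 1)
  obtain ⟨u, hu⟩ := h.exists_sum_range_add_eq_zero (n := m + 1) (a := a)
    ⟨0, by omega, by simp [a]⟩ (-1)
  refine exists_pow_sub_eq_of_pow_pow_eq_sum c (algebraMap L A u) (algebraMap L A ∘ β) m
    (by simpa [Algebra.smul_def] using hc) ?_
  simp only [Function.comp_apply, ← map_mul, ← map_pow, ← map_sum, ← map_one (algebraMap L A),
    ← map_add]
  congr 1
  rw [sum_range_succ'] at hu
  simp only [a, mul_pow] at hu ⊢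
  linear_combination hu

end IsPClosed

section Galois

variable {K M : Type*} [CommSemiring K] [Field M] [Algebra K M]

namespace AlgEquiv

theorem exists_sum_range_pow_apply_ne_zero (σ : M ≃ₐ[K] M) (hσ : 0 < orderOf σ) :
    ∃ θ : M, ∑ i ∈ range (orderOf σ), (σ ^ i) θ ≠ 0 := by
  by_contra! hall
  have hinj :
      Function.Injective fun i : Fin (orderOf σ) => ((σ ^ (i : ℕ) : M ≃ₐ[K] M) : M →* M) :=
    fun i j hij => Fin.ext <| pow_injOn_Iio_orderOf i.2 j.2 <|
      AlgEquiv.ext fun x => DFunLike.congr_fun hij x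
  have hsum :
      ∑ i : Fin (orderOf σ), (1 : M) • (((σ ^ (i : ℕ) : M ≃ₐ[K] M) : M →* M) : M → M) = 0 :=
    funext fun θ => by
      simp only [Finset.sum_apply, one_smul, Pi.zero_apply, MonoidHom.coe_coe]
      exact (Fin.sum_univ_eq_sum_range (fun i => (σ ^ i) θ) _).trans (hall θ)
  exact one_ne_zero <| Fintype.linearIndependent_iff.mp
    ((linearIndependent_monoidHom M M).comp _ hinj) _ hsum ⟨0, hσ⟩

theorem sum_range_pow_succ_apply {σ : M ≃ₐ[K] M} {n : ℕ} (hσ : σ ^ n = 1) (θ : M) :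
    ∑ i ∈ range n, (σ ^ (i + 1)) θ = ∑ i ∈ range n, (σ ^ i) θ := by
  have := sum_range_sub (fun i => (σ ^ i) θ) n
  rwa [hσ, pow_zero, sub_self, sum_sub_distrib, sub_eq_zero] at this

theorem apply_sum_range_pow_apply {σ : M ≃ₐ[K] M} {n : ℕ} (hσ : σ ^ n = 1) (θ : M) :
    σ (∑ i ∈ range n, (σ ^ i) θ) = ∑ i ∈ range n, (σ ^ i) θ := by
  rw [map_sum, ← sum_range_pow_succ_apply hσ θ]
  simp only [pow_succ', mul_apply]

theorem apply_sum_range_mul_pow_apply {σ : M ≃ₐ[K] M} {n : ℕ} (hσ : σ ^ n = 1) (hn : (n : M) = 0)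
    (θ : M) : σ (∑ i ∈ range n, (i : M) * (σ ^ i) θ) =
      ∑ i ∈ range n, (i : M) * (σ ^ i) θ - ∑ i ∈ range n, (σ ^ i) θ := by
  have htel := sum_range_sub (fun i => (i : M) * (σ ^ i) θ) n
  rw [hn, zero_mul, Nat.cast_zero, zero_mul, sub_zero] at htel
  have hshift := sum_range_pow_succ_apply hσ θ
  simp only [map_sum, map_mul, map_natCast, ← mul_apply, ← pow_succ']
  push_cast at htel
  simp only [add_mul, one_mul, add_sub_right_comm, sum_add_distrib, sum_sub_distrib] at htel
  linear_combination htel - hshift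

theorem exists_apply_eq_add_one (σ : M ≃ₐ[K] M) (hσ : IsOfFinOrder σ)
    (hchar : (orderOf σ : M) = 0) : ∃ α : M, σ α = α + 1 := by
  obtain ⟨θ, hs⟩ := σ.exists_sum_range_pow_apply_ne_zero hσ.orderOf_pos
  refine ⟨-(∑ i ∈ range (orderOf σ), (i : M) * (σ ^ i) θ) / ∑ i ∈ range (orderOf σ), (σ ^ i) θ,
    ?_⟩
  rw [map_div₀, map_neg, apply_sum_range_mul_pow_apply (pow_orderOf_eq_one σ) hchar,
    apply_sum_range_pow_apply (pow_orderOf_eq_one σ)]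
  field_simp
  ring

end AlgEquiv

theorem RingHom.apply_eq_self_of_pow_eq_self {p : ℕ} [Fact p.Prime] [CharP M p] (f : M →+* M)
    {x : M} (hx : x ^ p = x) : f x = x :=
  (bot_le : ⊥ ≤ f.eqLocusField (RingHom.id M)) ((Subfield.mem_bot_iff_pow_eq_self M p).mpr hx)

end Galois

theorem IsPClosed.not_dvd_finrank_of_isGalois {p : ℕ} [Fact p.Prime] {L M : Type*} [Field L]
    [CharP L p] [Field M] [Algebra L M] [FiniteDimensional L M] [IsGalois L M]
    (h : IsPClosed p L) : ¬ p ∣ Module.finrank L M := by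
  intro hdvd
  have : CharP M p := charP_of_injective_algebraMap (algebraMap L M).injective p
  obtain ⟨σ, hσ⟩ := exists_prime_orderOf_dvd_card' (G := M ≃ₐ[L] M) p
    (by rwa [IsGalois.card_aut_eq_finrank])
  obtain ⟨α, hα⟩ := σ.exists_apply_eq_add_one (isOfFinOrder_of_finite σ)
    (by rw [hσ, CharP.cast_eq_zero])
  have hc : α ^ p - α ∈ fixedField (Subgroup.zpowers σ) := by
    have hσc : σ ∈ MulAction.stabilizer (M ≃ₐ[L] M) (α ^ p - α) := by
      rw [MulAction.mem_stabilizer_iff, AlgEquiv.smul_def, map_sub, map_pow, hα, add_pow_char,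
        one_pow, add_sub_add_right_eq_sub]
    exact fun g => Subgroup.zpowers_le.mpr hσc g.2
  obtain ⟨y, hy⟩ := h.exists_pow_sub_eq (A := fixedField (Subgroup.zpowers σ)) ⟨_, hc⟩
  have hσy : σ y = y := y.2 ⟨σ, Subgroup.mem_zpowers σ⟩
  have hroot : (α - y) ^ p = α - y := by
    rw [sub_pow_char]
    have hy' : (y : M) ^ p - y = α ^ p - α := congrArg Subtype.val hy
    linear_combination -hy'
  have := σ.toRingEquiv.toRingHom.apply_eq_self_of_pow_eq_self hroot
  simp only [RingEquiv.toRingHom_eq_coe, RingHom.coe_coe, AlgEquiv.coe_ringEquiv, map_sub, hα,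
    hσy] at this
  exact one_ne_zero (by linear_combination this)

theorem IsPClosed.not_dvd_finrank {p : ℕ} [Fact p.Prime] {L E : Type*} [Field L] [CharP L p]
    [Field E] [Algebra L E] [FiniteDimensional L E] (h : IsPClosed p L) :
    ¬ p ∣ Module.finrank L E := by
  have := h.perfectRing
  have := PerfectRing.toPerfectField L p
  have : Algebra.IsAlgebraic L (AlgebraicClosure E) := .trans L E (AlgebraicClosure E)
  let M := normalClosure L E (AlgebraicClosure E)
  have : IsGalois L M := ⟨⟩
  intro hdvd
  exact h.not_dvd_finrank_of_isGalois (M := M)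
    (Module.finrank_mul_finrank L E M ▸ hdvd.mul_right _)

theorem IsAlgClosed.isPClosed {p : ℕ} (hp : 1 < p) (Ω : Type*) [Field Ω] [IsAlgClosed Ω] :
    IsPClosed p Ω := by
  intro n a b
  have hlow : (∑ i : Fin n, C (a i) * X ^ p ^ (i : ℕ) + C b).degree < (p ^ n : ℕ) := by
    refine (degree_add_le _ _).trans_lt (max_lt ((degree_sum_le _ _).trans_lt ?_)
      (degree_C_le.trans_lt (by exact_mod_cast pow_pos (by omega) n)))
    refine (Finset.sup_lt_iff (WithBot.bot_lt_coe _)).mpr fun i _ => ?_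
    exact (degree_C_mul_X_pow_le _ _).trans_lt (by exact_mod_cast Nat.pow_lt_pow_right hp i.2)
  obtain ⟨x, hx⟩ :=
    IsAlgClosed.exists_root (X ^ p ^ n + (∑ i : Fin n, C (a i) * X ^ p ^ (i : ℕ) + C b))
    (by rw [degree_add_eq_left_of_degree_lt (by rwa [degree_X_pow]), degree_X_pow]; positivity)
  exact ⟨x, by simpa [add_assoc, eval_finsetSum] using hx⟩

theorem Algebra.trace_pow_pow_expChar {K E : Type*} [Field K] [Field E] [Algebra K E]
    [FiniteDimensional K E] [Algebra.IsSeparable K E] {p : ℕ} [ExpChar K p] (y : E) (n : ℕ) :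
    trace K E (y ^ p ^ n) = trace K E y ^ p ^ n := by
  have := ExpChar.of_injective_algebraMap' K (A := AlgebraicClosure K) p
  apply (algebraMap K (AlgebraicClosure K)).injective
  rw [trace_eq_sum_embeddings (AlgebraicClosure K), map_pow (algebraMap K _),
    trace_eq_sum_embeddings (AlgebraicClosure K), sum_pow_char_pow]
  simp only [map_pow]

theorem exists_root_of_root_of_finrank_ne_zero {p : ℕ} {L E : Type*} [Field L] [ExpChar L p]
    [Field E] [Algebra L E] [FiniteDimensional L E] [Algebra.IsSeparable L E]
    (hd : (Module.finrank L E : L) ≠ 0) {n : ℕ} (a : Fin n → L) (b : L) {ξ : E}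
    (hξ : ξ ^ p ^ n + (∑ i : Fin n, algebraMap L E (a i) * ξ ^ p ^ (i : ℕ)) +
      algebraMap L E b = 0) :
    ∃ x : L, x ^ p ^ n + (∑ i : Fin n, a i * x ^ p ^ (i : ℕ)) + b = 0 := by
  set d : L := (Module.finrank L E : L)
  have htr := congrArg (Algebra.trace L E) hξ
  simp only [map_add, map_sum, map_zero, ← Algebra.smul_def, LinearMap.map_smul,
    Algebra.trace_pow_pow_expChar, Algebra.trace_algebraMap, nsmul_eq_mul, smul_eq_mul] at htr
  have hdpow : ∀ k : ℕ, d⁻¹ ^ p ^ k = d⁻¹ := fun k => by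
    rw [inv_pow, ← iterateFrobenius_def, map_natCast]
  refine ⟨d⁻¹ * Algebra.trace L E ξ, ?_⟩
  simp only [mul_pow, hdpow, mul_left_comm _ d⁻¹, ← mul_sum]
  field_simp
  linear_combination htr

theorem exists_pow_eq_of_forall_not_dvd_finrank {p : ℕ} (hp : p.Prime) {L : Type u} [Field L]
    (hext : ∀ (E : Type u) [Field E] [Algebra L E] [FiniteDimensional L E],
      ¬ p ∣ Module.finrank L E) (u : L) : ∃ x : L, x ^ p = u := by
  by_contra! hu
  have := Fact.mk (X_pow_sub_C_irreducible_of_prime hp hu)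
  let pb := AdjoinRoot.powerBasis (X_pow_sub_C_ne_zero hp.pos u)
  have : FiniteDimensional L (AdjoinRoot (X ^ p - C u)) := pb.finite
  exact hext _ (by rw [pb.finrank, AdjoinRoot.powerBasis_dim, natDegree_X_pow_sub_C])

theorem isPClosed_of_forall_not_dvd_finrank {p : ℕ} [Fact p.Prime] {L : Type u} [Field L]
    [CharP L p] (hext : ∀ (E : Type u) [Field E] [Algebra L E] [FiniteDimensional L E],
      ¬ p ∣ Module.finrank L E) : IsPClosed p L := by
  have : PerfectRing L p :=
    .ofSurjective L p (exists_pow_eq_of_forall_not_dvd_finrank Fact.out hext)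
  have := PerfectRing.toPerfectField L p
  intro n a b
  obtain ⟨x, hx⟩ := IsAlgClosed.isPClosed (Fact.out : p.Prime).one_lt (AlgebraicClosure L) n
    (algebraMap L _ ∘ a) (algebraMap L _ b)
  have : FiniteDimensional L L⟮x⟯ :=
    adjoin.finiteDimensional (Algebra.IsIntegral.isIntegral x)
  refine exists_root_of_root_of_finrank_ne_zero (E := L⟮x⟯)
    (ξ := AdjoinSimple.gen L x) ?_ a b ?_
  · rw [Ne, CharP.cast_eq_zero_iff L p]
    exact hext _
  · apply (algebraMap L⟮x⟯ (AlgebraicClosure L)).injective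
    simpa [AdjoinSimple.algebraMap_gen, ← IsScalarTower.algebraMap_apply]
      using hx

/-- A field `L` of characteristic `p > 0` is `p`-closed (every polynomial
`X^{pⁿ} + a_{n-1}X^{p^{n-1}} + ⋯ + a₁X^p + a₀X + b` has a root in `L`) if and only if `L`
has no finite field extension of degree divisible by `p`. -/
theorem pClosed_iff_no_extension_of_degree_divisible_by_p
    {p : ℕ} (hp : p.Prime) {L : Type u} [Field L] [CharP L p] :
    (∀ (n : ℕ) (a : Fin n → L) (b : L),
        ∃ x : L, x ^ p ^ n + (∑ i : Fin n, a i * x ^ p ^ (i : ℕ)) + b = 0) ↔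
      ∀ (E : Type u) [Field E] [Algebra L E] [FiniteDimensional L E],
        ¬ (p ∣ Module.finrank L E) := by
  have := Fact.mk hp
  exact ⟨fun h _ _ _ _ => IsPClosed.not_dvd_finrank h, isPClosed_of_forall_not_dvd_finrank⟩
end

section
/- Let K ⊆ F be an extension of fields of characteristic p > 0, with F viewed as a right module over R = K[t;Frob] (where x·t = x^p and x·a = ax for a ∈ K, so additive polynomials over K act on F). Then the torsion submodule F_tor equals the relative algebraic closure of K in F. -/
/-- Let `K ⊆ F` be fields of characteristic `p > 0`, with `F` viewed as a
module over the ring of additive polynomials `K[t;Frob]` (so `r = Σᵢ tⁱaᵢ` acts as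
`x ↦ Σᵢ aᵢ x^{pⁱ}`).  Then the torsion elements — the roots of nonzero additive polynomials
over `K` — are exactly the elements of `F` algebraic over `K`. -/
theorem torsion_eq_relative_algebraic_closure
    {p : ℕ} (hp : p.Prime) {K F : Type*} [Field K] [Field F] [Algebra K F] [CharP K p] :
    {x : F | ∃ c : ℕ →₀ K, c ≠ 0 ∧
        ∑ i ∈ c.support, algebraMap K F (c i) * x ^ p ^ i = 0}
      = {x : F | IsAlgebraic K x} := by
  have hpinj : Function.Injective (fun i : ℕ => p ^ i) :=
    fun a b h => Nat.pow_right_injective hp.two_le h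
  ext x
  simp only [Set.mem_setOf_eq]
  constructor
  · rintro ⟨c, hc, hsum⟩
    refine ⟨∑ i ∈ c.support, Polynomial.C (c i) * Polynomial.X ^ (p ^ i), ?_, ?_⟩
    · intro h
      apply hc
      ext j
      have hco := congrArg (fun q => Polynomial.coeff q (p ^ j)) h
      simp only [Polynomial.finset_sum_coeff, Polynomial.coeff_C_mul,
        Polynomial.coeff_X_pow, Polynomial.coeff_zero, mul_ite, mul_one, mul_zero] at hco
      by_cases hj : j ∈ c.support
      · rw [Finset.sum_eq_single j (fun i _ hij => by
          rw [if_neg (fun h => hij (hpinj h).symm)]) (fun h => absurd hj h), if_pos rfl] at hco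
        exact hco
      · simpa using Finsupp.notMem_support_iff.mp hj
    · rw [map_sum]
      simpa using hsum
  · intro hx
    have hint : IsIntegral K x := hx.isIntegral
    have hfg := hint.fg_adjoin_singleton
    have hfin : Module.Finite K (Algebra.adjoin K ({x} : Set F)) :=
      Module.Finite.iff_fg.mpr hfg
    set y : Algebra.adjoin K ({x} : Set F) := ⟨x, Algebra.self_mem_adjoin_singleton K x⟩
    have hnli := Module.Finite.not_linearIndependent_of_infinite
      (R := K) (fun i : ℕ => y ^ (p ^ i))
    rw [linearIndependent_iff] at hnli
    push_neg at hnli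
    obtain ⟨c, htot, hc0⟩ := hnli
    refine ⟨c, hc0, ?_⟩
    have := congrArg (Subtype.val) htot
    rw [Finsupp.linearCombination_apply, Finsupp.sum] at this
    simpa [Algebra.smul_def] using this
end
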